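/- The functor from Gorenstein-projective Z[ε]-modules (A ⊕ B, [[0,0],[u,0]]) with u injective to the monomorphism category S(F), sending such a module to the embedding (Im u ⊆ B) and a morphism [[a,0],[c,b]] to the commutative square (a,b), is full, dense, and reflects isomorphisms (i.e., is an epivalence), but is not faithful in general. -/

import Mathlib

/-! The functor only forgets the entry `c` of a morphism `[[a,0],[c,b]]`. Taking `c = 0` lifts
every square, and a lower triangular matrix with invertible diagonal is invertible, so the functor
is full and reflects isomorphisms; the module action `ε` itself is a nonzero morphism with zero
diagonal, so it is not faithful. -/

open CategoryTheory

/-- Gorenstein-projective `ℤ[ε]`-modules `(A ⊕ B, [[0,0],[u,0]])` with `u` injective: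
objects are injective maps `u : ℤⁿ → ℤᵐ` of finitely generated free abelian groups. -/
structure GPObj where
  n : ℕ
  m : ℕ
  u : (Fin n → ℤ) →ₗ[ℤ] (Fin m → ℤ)
  inj : Function.Injective u

/-- The monomorphism category `S(F)`: embeddings of a subgroup into a finitely
generated free abelian group. -/
structure SFObj where
  n : ℕ
  m : ℕ
  u : (Fin n → ℤ) →ₗ[ℤ] (Fin m → ℤ)
  inj : Function.Injective u

/-- Morphisms of `ℤ[ε]`-modules are lower triangular matrices `[[a,0],[c,b]]` with
`b ∘ u = u' ∘ a`. -/
instance : Category GPObj where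
  Hom X Y := {t : ((Fin X.n → ℤ) →ₗ[ℤ] (Fin Y.n → ℤ)) ×
      ((Fin X.m → ℤ) →ₗ[ℤ] (Fin Y.m → ℤ)) ×
      ((Fin X.n → ℤ) →ₗ[ℤ] (Fin Y.m → ℤ)) //
      t.2.1 ∘ₗ X.u = Y.u ∘ₗ t.1}
  id X := ⟨(LinearMap.id, LinearMap.id, 0), by simp⟩
  comp {X Y Z} f g := ⟨(g.1.1 ∘ₗ f.1.1, g.1.2.1 ∘ₗ f.1.2.1,
      g.1.2.2 ∘ₗ f.1.1 + g.1.2.1 ∘ₗ f.1.2.2), by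
    apply LinearMap.ext; intro x
    have hf := LinearMap.congr_fun f.2 x
    have hg := LinearMap.congr_fun g.2 (f.1.1 x)
    simp only [LinearMap.comp_apply] at hf hg ⊢
    rw [hf, hg]⟩
  id_comp f := Subtype.ext (by
    simp [Prod.ext_iff])
  comp_id f := Subtype.ext (by
    simp [Prod.ext_iff])
  assoc f g h := Subtype.ext (by
    simp [Prod.ext_iff, LinearMap.comp_assoc, LinearMap.comp_add, LinearMap.add_comp,
      add_assoc])

/-- Morphisms in `S(F)` are commutative squares `(a, b)` with `b ∘ u = u' ∘ a`. -/
instance : Category SFObj where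
  Hom X Y := {t : ((Fin X.n → ℤ) →ₗ[ℤ] (Fin Y.n → ℤ)) ×
      ((Fin X.m → ℤ) →ₗ[ℤ] (Fin Y.m → ℤ)) //
      t.2 ∘ₗ X.u = Y.u ∘ₗ t.1}
  id X := ⟨(LinearMap.id, LinearMap.id), by simp⟩
  comp {X Y Z} f g := ⟨(g.1.1 ∘ₗ f.1.1, g.1.2 ∘ₗ f.1.2), by
    apply LinearMap.ext; intro x
    have hf := LinearMap.congr_fun f.2 x
    have hg := LinearMap.congr_fun g.2 (f.1.1 x)
    simp only [LinearMap.comp_apply] at hf hg ⊢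
    rw [hf, hg]⟩
  id_comp f := Subtype.ext (by simp [Prod.ext_iff])
  comp_id f := Subtype.ext (by simp [Prod.ext_iff])
  assoc f g h := Subtype.ext (by simp [Prod.ext_iff, LinearMap.comp_assoc])

/-- The functor from Gorenstein-projective `ℤ[ε]`-modules to the monomorphism category
`S(F)`, sending `(A ⊕ B, [[0,0],[u,0]])` to the embedding `u : A → B` (i.e. to
`(Im u ⊆ B)`) and the morphism `[[a,0],[c,b]]` to the square `(a, b)`. -/
def pushDown : GPObj ⥤ SFObj where
  obj X := ⟨X.n, X.m, X.u, X.inj⟩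
  map f := ⟨(f.1.1, f.1.2.1), f.2⟩
  map_id X := rfl
  map_comp f g := rfl

instance pushDown_full : pushDown.Full :=
  ⟨fun g => ⟨⟨(g.1.1, g.1.2, 0), g.2⟩, rfl⟩⟩

instance pushDown_essSurj : pushDown.EssSurj :=
  ⟨fun X => ⟨⟨X.n, X.m, X.u, X.inj⟩, ⟨Iso.refl _⟩⟩⟩

namespace GPObj

lemma hom_ext {X Y : GPObj} {f g : X ⟶ Y} (ha : f.1.1 = g.1.1) (hb : f.1.2.1 = g.1.2.1)
    (hc : f.1.2.2 = g.1.2.2) : f = g :=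
  Subtype.ext (Prod.ext ha (Prod.ext hb hc))

variable {X Y : GPObj} (f : X ⟶ Y) {a' : (Fin Y.n → ℤ) →ₗ[ℤ] (Fin X.n → ℤ)}
  {b' : (Fin Y.m → ℤ) →ₗ[ℤ] (Fin X.m → ℤ)}

/-- Given inverses `a'`, `b'` of `a`, `b`, the lower triangular inverse `[[a',0],[-b'ca',b']]`
of `[[a,0],[c,b]]`. -/
def triangularInv (h : b' ∘ₗ Y.u = X.u ∘ₗ a') : Y ⟶ X :=
  ⟨(a', b', -(b' ∘ₗ f.1.2.2 ∘ₗ a')), h⟩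

lemma hom_triangularInv (h : b' ∘ₗ Y.u = X.u ∘ₗ a') (ha : a' ∘ₗ f.1.1 = LinearMap.id)
    (hb : b' ∘ₗ f.1.2.1 = LinearMap.id) : f ≫ triangularInv f h = 𝟙 X := by
  refine hom_ext ha hb ?_
  change (-(b' ∘ₗ f.1.2.2 ∘ₗ a')) ∘ₗ f.1.1 + b' ∘ₗ f.1.2.2 = 0
  rw [LinearMap.neg_comp, LinearMap.comp_assoc, LinearMap.comp_assoc, ha, LinearMap.comp_id,
    neg_add_cancel]

lemma triangularInv_hom (h : b' ∘ₗ Y.u = X.u ∘ₗ a') (ha : f.1.1 ∘ₗ a' = LinearMap.id)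
    (hb : f.1.2.1 ∘ₗ b' = LinearMap.id) : triangularInv f h ≫ f = 𝟙 Y := by
  refine hom_ext ha hb ?_
  change f.1.2.2 ∘ₗ a' + f.1.2.1 ∘ₗ (-(b' ∘ₗ f.1.2.2 ∘ₗ a')) = 0
  rw [LinearMap.comp_neg, ← LinearMap.comp_assoc, hb, LinearMap.id_comp, add_neg_cancel]

end GPObj

instance pushDown_reflectsIsomorphisms : pushDown.ReflectsIsomorphisms := by
  refine ⟨fun {X Y} f _ => ?_⟩
  let g := inv (pushDown.map f)
  have hfg : pushDown.map f ≫ g = 𝟙 _ := IsIso.hom_inv_id _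
  have hgf : g ≫ pushDown.map f = 𝟙 _ := IsIso.inv_hom_id _
  exact ⟨GPObj.triangularInv f g.2,
    GPObj.hom_triangularInv f g.2 (congrArg (fun t => t.1.1) hfg) (congrArg (fun t => t.1.2) hfg),
    GPObj.triangularInv_hom f g.2 (congrArg (fun t => t.1.1) hgf) (congrArg (fun t => t.1.2) hgf)⟩

theorem pushDown_not_faithful : ¬ pushDown.Faithful := by
  intro h
  let X : GPObj := ⟨1, 1, LinearMap.id, Function.injective_id⟩
  let zero : X ⟶ X := ⟨(0, 0, 0), rfl⟩
  let ε : X ⟶ X := ⟨(0, 0, LinearMap.id), rfl⟩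
  have hε : zero = ε := pushDown.map_injective rfl
  have h01 := congrArg (fun t : X ⟶ X => t.1.2.2 1 0) hε
  simp [zero, ε] at h01

theorem stmt11 :
    pushDown.Full ∧ pushDown.EssSurj ∧ pushDown.ReflectsIsomorphisms ∧
      ¬ pushDown.Faithful :=
  ⟨inferInstance, inferInstance, inferInstance, pushDown_not_faithful⟩
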